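/- arXiv:1111.5467 — 5 statements merged into one kernel-verified Lean document; each statement's English description precedes it below -/
import Mathlib

section
/- Let W = {w_1, …, w_k} be an independent set with range R of a locally strongly transitive automaton 𝒜 = ⟨Q, A, δ⟩. Then for every subset P of R, the sum over i = 1, …, k of Card(P w_i^{-1} ∩ R) equals k · Card(P). -/
/-- The extension of a transition function `δ : Q → A → Q` to words. -/
def run {Q A : Type*} (δ : Q → A → Q) (q : Q) (u : List A) : Q := u.foldl δ q

/-- `W` is an independent set of words with range `R`. -/
def IsIndependent {Q A : Type*} [DecidableEq Q] (δ : Q → A → Q)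
    (W : Finset (List A)) (R : Finset Q) : Prop :=
  W.card = R.card ∧ ∀ s : Q, W.image (fun w => run δ s w) = R

/-
Double counting: the sum counts pairs `(w, q) ∈ W × R` with `q w ∈ P`. For a fixed state `q`,
the map `w ↦ q w` is a bijection from `W` onto `R` (it is onto and `|W| = |R|`), so exactly
`|P|` words send `q` into `P ⊆ R`. Summing over the `k` states of `R` gives `k · |P|`.
-/

theorem Finset.card_filter_mem_eq_of_injOn {α β : Type*} [DecidableEq β] {f : α → β}
    {W : Finset α} (hf : Set.InjOn f W) (P : Finset β) (hP : P ⊆ W.image f) :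
    (W.filter (fun w => f w ∈ P)).card = P.card := by
  rw [← Finset.card_image_of_injOn (hf.mono (Finset.coe_subset.mpr (Finset.filter_subset _ _))),
    ← Finset.filter_image (p := (· ∈ P)), Finset.filter_mem_eq_inter, Finset.inter_eq_right.mpr hP]

namespace IsIndependent

variable {Q A : Type*} [DecidableEq Q] {δ : Q → A → Q} {W : Finset (List A)} {R : Finset Q}

theorem injOn_run (hW : IsIndependent δ W R) (q : Q) : Set.InjOn (run δ q) W :=
  Finset.injOn_of_card_image_eq (by rw [hW.2 q, hW.1])

theorem card_filter_run_mem (hW : IsIndependent δ W R) (q : Q) {P : Finset Q} (hP : P ⊆ R) :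
    (W.filter (fun w => run δ q w ∈ P)).card = P.card :=
  Finset.card_filter_mem_eq_of_injOn (hW.injOn_run q) P (by rwa [hW.2 q])

end IsIndependent

theorem stmt_1_general {Q A : Type*} [DecidableEq Q]
    (δ : Q → A → Q) (W : Finset (List A)) (R : Finset Q) (k : ℕ)
    (hW : IsIndependent δ W R) (hk : W.card = k)
    (P : Finset Q) (hP : P ⊆ R) :
    ∑ w ∈ W, (R.filter (fun q => run δ q w ∈ P)).card = k * P.card := by
  calc ∑ w ∈ W, (R.filter (fun q => run δ q w ∈ P)).card
      = ∑ q ∈ R, (W.filter (fun w => run δ q w ∈ P)).card := by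
        simp only [Finset.card_filter]
        exact Finset.sum_comm
    _ = ∑ _q ∈ R, P.card := Finset.sum_congr rfl fun q _ => hW.card_filter_run_mem q hP
    _ = k * P.card := by rw [Finset.sum_const, smul_eq_mul, ← hW.1, hk]

/-- If `W = {w_1, …, w_k}` is an independent set with range `R`, then for every
subset `P` of `R` one has `∑_{i=1}^{k} Card(P w_i^{-1} ∩ R) = k · Card(P)`. -/
theorem stmt_1 {Q A : Type*} [Fintype Q] [DecidableEq Q] [Fintype A]
    (δ : Q → A → Q) (W : Finset (List A)) (R : Finset Q) (k : ℕ)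
    (hW : IsIndependent δ W R) (hk : W.card = k)
    (P : Finset Q) (hP : P ⊆ R) :
    ∑ w ∈ W, (R.filter (fun q => run δ q w ∈ P)).card = k * P.card :=
  stmt_1_general δ W R k hW hk P hP
end

section
/- Let A be a matrix over the rationals with k rows (and finitely many columns). Suppose that no row of A is zero and that every column of A has at most t > 0 non-zero entries. Then rank(A) ≥ k/t. -/
/-!
Choose a basis `b` of the column space among the columns of `A`, so `#b = rank A`. A row that is
nonzero meets some column, hence some vector of `b`, since the coordinate functional of that row
cannot vanish on the span of `b`. Assigning to every row such a basis column and counting fibres,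
each of size at most `t`, gives `k ≤ t * rank A`.
-/

open Finset Submodule Module

theorem exists_mem_apply_ne_zero_of_mem_span {R ι : Type*} [Semiring R] {b : Set (ι → R)}
    {x : ι → R} (hx : x ∈ span R b) {i : ι} (hi : x i ≠ 0) : ∃ v ∈ b, v i ≠ 0 := by
  by_contra! h
  have hker : span R b ≤ LinearMap.ker (LinearMap.proj i) := span_le.2 h
  exact hi (hker hx)

theorem card_le_mul_card_of_forall_exists_apply_ne_zero {R ι : Type*} [Zero R] [DecidableEq R]
    [Fintype ι] {s : Finset (ι → R)} {t : ℕ} (hs : ∀ v ∈ s, #{i | v i ≠ 0} ≤ t)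
    (hcover : ∀ i, ∃ v ∈ s, v i ≠ 0) : Fintype.card ι ≤ t * #s := by
  choose f hfs hf using hcover
  rw [← card_univ]
  refine card_le_mul_card_image_of_maps_to (fun i _ ↦ hfs i) t fun v hv ↦ ?_
  refine (card_le_card fun i hi ↦ ?_).trans (hs v hv)
  obtain rfl := (mem_filter.1 hi).2
  exact mem_filter.2 ⟨mem_univ i, hf i⟩

theorem Matrix.card_le_mul_rank {K m n : Type*} [Field K] [DecidableEq K] [Fintype m]
    [Fintype n] (A : Matrix m n K) {t : ℕ} (hrow : ∀ i, A i ≠ 0)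
    (hcol : ∀ j, #{i | A i j ≠ 0} ≤ t) : Fintype.card m ≤ t * A.rank := by
  obtain ⟨b, hbcols, hbspan, hbind⟩ := exists_linearIndependent K (Set.range A.col)
  have : Fintype b := (Set.finite_range A.col).subset hbcols |>.fintype
  have hrank : A.rank = #b.toFinset := by
    rw [rank_eq_finrank_span_cols, ← hbspan, finrank_span_set_eq_card hbind]
  rw [hrank]
  refine card_le_mul_card_of_forall_exists_apply_ne_zero (fun v hv ↦ ?_) fun i ↦ ?_
  · obtain ⟨j, rfl⟩ := hbcols (Set.mem_toFinset.1 hv)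
    exact hcol j
  · obtain ⟨j, hj⟩ := Function.ne_iff.1 (hrow i)
    have hcolj : A.col j ∈ span K b := hbspan ▸ subset_span ⟨j, rfl⟩
    obtain ⟨v, hv, hvi⟩ := exists_mem_apply_ne_zero_of_mem_span hcolj hj
    exact ⟨v, Set.mem_toFinset.2 hv, hvi⟩

theorem stmt_3_general {k n : ℕ}
    (A : Matrix (Fin k) (Fin n) ℚ) (t : ℕ)
    (hrow : ∀ i : Fin k, A i ≠ 0)
    (hcol : ∀ j : Fin n, (Finset.univ.filter (fun i : Fin k => A i j ≠ 0)).card ≤ t) :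
    (k : ℚ) / (t : ℚ) ≤ (A.rank : ℚ) := by
  have h := Fintype.card_fin k ▸ A.card_le_mul_rank hrow hcol
  exact div_le_of_le_mul₀ t.cast_nonneg A.rank.cast_nonneg (by rw [mul_comm]; exact_mod_cast h)

/-- If a rational `k × n` matrix has no zero row and every column has at most
`t > 0` non-zero entries, then its rank is at least `k / t`. -/
theorem stmt_3 {k n : ℕ} (hk : 1 ≤ k) (hn : 1 ≤ n)
    (A : Matrix (Fin k) (Fin n) ℚ) (t : ℕ) (ht : 0 < t)
    (hrow : ∀ i : Fin k, A i ≠ 0)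
    (hcol : ∀ j : Fin n, (Finset.univ.filter (fun i : Fin k => A i j ≠ 0)).card ≤ t) :
    (k : ℚ) / (t : ℚ) ≤ (A.rank : ℚ) :=
  stmt_3_general A t hrow hcol
end

section
/- Let 𝒜 = ⟨Q, A, δ⟩ be an automaton with an independent set W = {w_1, …, w_k} with range R, and let K ⊆ R be such that K w_i^{-1} ≠ ∅ and K w_i^{-1} ≠ Q for every i = 1, …, k. Let C be the k × Card(Q) rational matrix whose (i, q)-entry equals 1 − Card(K)/k if δ(q, w_i) ∈ K, and −Card(K)/k otherwise. Then rank(C) ≥ max{ (k − Card(K))/Card(K), Card(K)/(k − Card(K)) }. -/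
/-- The family `w 0, …, w (k-1)` is an independent set of words with range `R`:
the words are pairwise distinct, `R` has `k` (distinct) states, and for every
state `s`, `{δ(s, w i) : i} = R`. -/
def IsIndependentFam {Q A : Type*} [DecidableEq Q] (δ : Q → A → Q) {k : ℕ}
    (w : Fin k → List A) (R : Finset Q) : Prop :=
  Function.Injective w ∧ R.card = k ∧
    ∀ s : Q, Finset.univ.image (fun i => run δ s (w i)) = R


/-!
Let `m = Card K` and let `v_q ∈ ℚ^k` be the indicator vector of `{i | δ(q, w_i) ∈ K}`.
By independence, `i ↦ δ(q, w_i)` is a bijection onto `R ⊇ K`, so every `v_q` has exactly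
`m` ones and every `1 - v_q` exactly `k - m`. The column `q` of `C` is `v_q - (m/k) 𝟙`, so
all `v_q` and `1 - v_q` lie in the column space of `C` enlarged by `𝟙`, of dimension at
most `rank C + 1`. The hypotheses on `K w_i⁻¹` say that the `v_q` cover all `k` coordinates,
and so do the `1 - v_q`; a basis of vectors with supports of size `s` covering `k`
coordinates has at least `k / s` elements, whence `k ≤ (rank C + 1) m` and
`k ≤ (rank C + 1)(k - m)`.
-/

open Finset Module Submodule

theorem card_le_finrank_span_mul_of_card_support_le {𝕜 n ι : Type*} [Field 𝕜] [DecidableEq 𝕜]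
    [Fintype n] (u : ι → n → 𝕜) {s : ℕ} (hsupp : ∀ j, #{i | u j i ≠ 0} ≤ s)
    (hcover : ∀ i, ∃ j, u j i ≠ 0) :
    Fintype.card n ≤ finrank 𝕜 (span 𝕜 (Set.range u)) * s := by
  classical
  obtain ⟨b, hbu, hspan, hind⟩ := exists_linearIndependent 𝕜 (Set.range u)
  have := hind.setFinite.fintype
  have hcover_b : ∀ i, ∃ x ∈ b.toFinset, x i ≠ 0 := by
    intro i
    by_contra! hzero
    obtain ⟨j, hj⟩ := hcover i
    have hle : span 𝕜 b ≤ LinearMap.ker (LinearMap.proj (R := 𝕜) (φ := fun _ : n => 𝕜) i) :=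
      span_le.2 fun x hx => hzero x (Set.mem_toFinset.2 hx)
    exact hj (hle (hspan ▸ subset_span (Set.mem_range_self j)))
  calc Fintype.card n
      ≤ #(b.toFinset.biUnion fun x => {i | x i ≠ 0}) := by
        rw [← card_univ]
        refine card_le_card fun i _ => ?_
        obtain ⟨x, hx, hxi⟩ := hcover_b i
        exact mem_biUnion.2 ⟨x, hx, mem_filter.2 ⟨mem_univ i, hxi⟩⟩
    _ ≤ #b.toFinset * s := by
        refine card_biUnion_le_card_mul _ _ _ fun x hx => ?_
        obtain ⟨j, rfl⟩ := hbu (Set.mem_toFinset.1 hx)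
        exact hsupp j
    _ = finrank 𝕜 (span 𝕜 (Set.range u)) * s := by
        rw [← hspan, finrank_span_set_eq_card hind]

theorem finrank_span_le_rank_add_one {𝕜 m n ι : Type*} [Field 𝕜] [Fintype m] [Fintype n]
    (C : Matrix m n 𝕜) (c : m → 𝕜) {u : ι → m → 𝕜}
    (hu : ∀ j, u j ∈ LinearMap.range C.mulVecLin ⊔ span 𝕜 {c}) :
    finrank 𝕜 (span 𝕜 (Set.range u)) ≤ C.rank + 1 := by
  have hc : finrank 𝕜 (span 𝕜 {c}) ≤ 1 := by
    simpa using finrank_span_le_card (R := 𝕜) ({c} : Set (m → 𝕜))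
  calc finrank 𝕜 (span 𝕜 (Set.range u))
      ≤ finrank 𝕜 ↥(LinearMap.range C.mulVecLin ⊔ span 𝕜 {c}) :=
        finrank_mono (span_le.2 (Set.range_subset_iff.2 hu))
    _ ≤ C.rank + finrank 𝕜 (span 𝕜 {c}) := finrank_add_le_finrank_add_finrank _ _
    _ ≤ C.rank + 1 := by omega

theorem card_le_rank_add_one_mul {𝕜 m n ι : Type*} [Field 𝕜] [DecidableEq 𝕜] [Fintype m]
    [Fintype n] (C : Matrix m n 𝕜) (c : m → 𝕜) (u : ι → m → 𝕜)
    (hu : ∀ j, u j ∈ LinearMap.range C.mulVecLin ⊔ span 𝕜 {c}) {s : ℕ}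
    (hsupp : ∀ j, #{i | u j i ≠ 0} ≤ s) (hcover : ∀ i, ∃ j, u j i ≠ 0) :
    Fintype.card m ≤ (C.rank + 1) * s :=
  (card_le_finrank_span_mul_of_card_support_le u hsupp hcover).trans
    (Nat.mul_le_mul_right s (finrank_span_le_rank_add_one C c hu))

theorem div_le_of_add_le_succ_mul {a b r : ℕ} (h : a + b ≤ (r + 1) * b) : (a / b : ℚ) ≤ r := by
  rw [add_one_mul] at h
  have hab : a ≤ r * b := by omega
  exact div_le_of_le_mul₀ b.cast_nonneg r.cast_nonneg (by exact_mod_cast hab)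

theorem IsIndependentFam.card_filter_run_mem {Q A : Type*} [DecidableEq Q] {δ : Q → A → Q}
    {k : ℕ} {w : Fin k → List A} {R K : Finset Q} (hW : IsIndependentFam δ w R) (hKR : K ⊆ R)
    (q : Q) : #{i | run δ q (w i) ∈ K} = #K := by
  obtain ⟨-, hcard, himage⟩ := hW
  have hinj : Set.InjOn (fun i => run δ q (w i)) (univ : Finset (Fin k)) :=
    injOn_of_card_image_eq (by rw [himage q, hcard, card_univ, Fintype.card_fin])
  rw [← card_image_of_injOn (hinj.mono (by simp)), ← filter_image (p := (· ∈ K)), himage q,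
    filter_mem_eq_inter, inter_eq_right.2 hKR]

theorem IsIndependentFam.card_filter_run_notMem {Q A : Type*} [DecidableEq Q] {δ : Q → A → Q}
    {k : ℕ} {w : Fin k → List A} {R K : Finset Q} (hW : IsIndependentFam δ w R) (hKR : K ⊆ R)
    (q : Q) : #{i | run δ q (w i) ∉ K} = k - #K := by
  rw [← hW.card_filter_run_mem hKR q, filter_not, card_sdiff_of_subset (filter_subset _ _),
    card_univ, Fintype.card_fin]

theorem stmt_4_general {Q A : Type*} [Fintype Q] [DecidableEq Q]
    (δ : Q → A → Q) {k : ℕ} (w : Fin k → List A) (R : Finset Q)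
    (hW : IsIndependentFam δ w R)
    (K : Finset Q) (hKR : K ⊆ R)
    (hne : ∀ i : Fin k, ∃ q : Q, run δ q (w i) ∈ K)
    (hnQ : ∀ i : Fin k, ∃ q : Q, run δ q (w i) ∉ K)
    (C : Matrix (Fin k) Q ℚ)
    (hC : ∀ (i : Fin k) (q : Q),
      C i q = if run δ q (w i) ∈ K then 1 - (K.card : ℚ) / (k : ℚ)
              else -((K.card : ℚ) / (k : ℚ))) :
    max (((k : ℚ) - (K.card : ℚ)) / (K.card : ℚ))
        ((K.card : ℚ) / ((k : ℚ) - (K.card : ℚ))) ≤ (C.rank : ℚ) := by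
  have hmk : #K ≤ k := hW.2.1 ▸ card_le_card hKR
  let v : Q → Fin k → ℚ := fun q i => if run δ q (w i) ∈ K then 1 else 0
  have hv : ∀ q, v q ∈ LinearMap.range C.mulVecLin ⊔ span ℚ {1} := fun q => by
    have hcol : v q = C.mulVecLin (Pi.single q 1) + (#K / k : ℚ) • 1 := by
      funext i
      simp only [v, Matrix.mulVecLin_apply, Matrix.mulVec_single_one, Matrix.col_apply, hC,
        Pi.add_apply, Pi.smul_apply, Pi.one_apply, smul_eq_mul, mul_one]
      split_ifs <;> ring
    exact hcol ▸ add_mem (mem_sup_left ⟨_, rfl⟩)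
      (mem_sup_right (smul_mem _ _ (mem_span_singleton_self 1)))
  let v' : Q → Fin k → ℚ := fun q i => if run δ q (w i) ∈ K then 0 else 1
  have hv' : ∀ q, v' q ∈ LinearMap.range C.mulVecLin ⊔ span ℚ {1} := fun q => by
    have hcompl : v' q = 1 - v q := by
      funext i
      simp only [v, v', Pi.sub_apply, Pi.one_apply]
      split_ifs <;> norm_num
    exact hcompl ▸ sub_mem (mem_sup_right (mem_span_singleton_self 1)) (hv q)
  have hk_le : k ≤ (C.rank + 1) * #K := by
    simpa using card_le_rank_add_one_mul C 1 v hv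
      (fun q => by simp [v, hW.card_filter_run_mem hKR q]) (fun i => by simpa [v] using hne i)
  have hk_le' : k ≤ (C.rank + 1) * (k - #K) := by
    simpa using card_le_rank_add_one_mul C 1 v' hv'
      (fun q => by simp [v', hW.card_filter_run_notMem hKR q])
      (fun i => by simpa [v'] using hnQ i)
  rw [max_le_iff, ← Nat.cast_sub hmk]
  exact ⟨div_le_of_add_le_succ_mul (by rwa [Nat.sub_add_cancel hmk]),
    div_le_of_add_le_succ_mul (by rwa [Nat.add_sub_cancel' hmk])⟩

/-- Lower bound on the rank of the matrix `C` of the system (4) of the paper: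
`C` is the `k × Card Q` matrix whose `(i, q)` entry is `1 - Card K / k` if
`δ(q, w_i) ∈ K` and `- Card K / k` otherwise. -/
theorem stmt_4 {Q A : Type*} [Fintype Q] [DecidableEq Q] [Fintype A]
    (δ : Q → A → Q) {k : ℕ} (w : Fin k → List A) (R : Finset Q)
    (hW : IsIndependentFam δ w R)
    (K : Finset Q) (hKR : K ⊆ R)
    (hne : ∀ i : Fin k, ∃ q : Q, run δ q (w i) ∈ K)
    (hnQ : ∀ i : Fin k, ∃ q : Q, run δ q (w i) ∉ K)
    (C : Matrix (Fin k) Q ℚ)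
    (hC : ∀ (i : Fin k) (q : Q),
      C i q = if run δ q (w i) ∈ K then 1 - (K.card : ℚ) / (k : ℚ)
              else -((K.card : ℚ) / (k : ℚ))) :
    max (((k : ℚ) - (K.card : ℚ)) / (K.card : ℚ))
        ((K.card : ℚ) / ((k : ℚ) - (K.card : ℚ))) ≤ (C.rank : ℚ) :=
  stmt_4_general δ w R hW K hKR hne hnQ C hC
end

section
/- Let 𝒜 = ⟨Q, A, δ⟩ be an n-state automaton with an independent set W = {w_1, …, w_k} with range R, and let M be the maximal cardinality of a reducible subset of R. Let K be a non-empty reducible subset of R with Card(K) ≠ M. Then there exist a word v ∈ A* and an index i with 1 ≤ i ≤ k such that Card(K (v w_i)^{-1} ∩ R) > Card(K) and |v| ≤ n − max{ (k − Card(K))/Card(K), Card(K)/(k − Card(K)) }. -/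
/-- A set of states `K` is reducible if some word maps it to a singleton. -/
def Reducible {Q A : Type*} [DecidableEq Q] (δ : Q → A → Q) (K : Finset Q) : Prop :=
  ∃ (v : List A) (q : Q), K.image (fun p => run δ p v) = {q}

/-!
Let `v` be a shortest word such that `K (v w_i)⁻¹ ∩ R` is larger than `K` for some `i`; a maximal
reducible subset of `R` shows that one exists. Since `i ↦ δ(s, w_i)` is a bijection onto `R` for
every state `s`, the counts `Card (K (u w_i)⁻¹ ∩ R)` sum to `k · Card K` over `i`, so for every `u`
shorter than `v` they all equal `Card K`. For the centred indicators
`y_i = 1_{K w_i⁻¹} - Card K / k` this says that the linear form `g ↦ ∑_{q ∈ R} g q` kills every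
`y_i ∘ δ(·, u)` with `|u| < |v|` but not `y_i ∘ δ(·, v)`. Hence the spans `U_ℓ` of the
`y_i ∘ δ(·, u)` with `|u| ≤ ℓ` grow strictly up to `ℓ = |v|` inside a proper subspace, so
`|v| + dim U_0 ≤ n`. Finally the `k` indicators of `K w_i⁻¹` (resp. of its complement) lie in
`U_0 + ℝ·1`, each meets `R` in `Card K` (resp. `k - Card K`) states and together they cover `R`,
whence `k ≤ Card K · (dim U_0 + 1)` and `k ≤ (k - Card K) · (dim U_0 + 1)`.
-/

open Finset Module Submodule

lemma run_append {Q A : Type*} (δ : Q → A → Q) (q : Q) (u v : List A) :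
    run δ q (u ++ v) = run δ (run δ q u) v :=
  List.foldl_append

section LinearAlgebra

variable {𝕜 : Type*} [Field 𝕜]

lemma card_le_mul_finrank_span {Q : Type*} [Fintype Q] [DecidableEq 𝕜] (R : Finset Q)
    (S : Set (Q → 𝕜)) (c : ℕ) (hcov : ∀ q ∈ R, ∃ g ∈ S, g q ≠ 0)
    (hcard : ∀ g ∈ S, #{q ∈ R | g q ≠ 0} ≤ c) :
    #R ≤ c * finrank 𝕜 (span 𝕜 S) := by
  classical
  obtain ⟨b, hbS, hspan, hli⟩ := exists_linearIndependent 𝕜 S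
  have := hli.setFinite.fintype
  have hR : R ⊆ b.toFinset.biUnion fun g => {q ∈ R | g q ≠ 0} := by
    intro q hq
    obtain ⟨g, hgS, hgq⟩ := hcov q hq
    by_contra hq'
    simp only [mem_biUnion, mem_filter, Set.mem_toFinset, not_exists, not_and,
      not_not] at hq'
    have hker : span 𝕜 b ≤ LinearMap.ker (LinearMap.proj q) :=
      span_le.2 fun g hg => hq' g hg hq
    exact hgq (hker (hspan ▸ subset_span hgS))
  calc #R ≤ #(b.toFinset.biUnion fun g => {q ∈ R | g q ≠ 0}) := card_le_card hR
    _ ≤ #b.toFinset * c :=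
      card_biUnion_le_card_mul _ _ _ fun g hg => hcard g (hbS (Set.mem_toFinset.1 hg))
    _ = c * finrank 𝕜 (span 𝕜 S) := by rw [← hspan, finrank_span_set_eq_card hli, mul_comm]

variable {V : Type*} [AddCommGroup V] [Module 𝕜 V] [FiniteDimensional 𝕜 V]

lemma finrank_le_finrank_add_one_of_le_sup_span_singleton {s t : Submodule 𝕜 V} {x : V}
    (h : s ≤ t ⊔ 𝕜 ∙ x) : finrank 𝕜 s ≤ finrank 𝕜 t + 1 :=
  calc finrank 𝕜 s ≤ finrank 𝕜 ↥(t ⊔ 𝕜 ∙ x) := finrank_mono h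
    _ ≤ finrank 𝕜 t + finrank 𝕜 (𝕜 ∙ x) := finrank_add_le_finrank_add_finrank t _
    _ ≤ finrank 𝕜 t + 1 := by
      grw [finrank_span_le_card ({x} : Set V), Set.toFinset_singleton, card_singleton]

lemma finrank_add_le_of_ne_succ {U : ℕ → Submodule 𝕜 V} (hU : Monotone U)
    (hstab : ∀ ℓ, U ℓ = U (ℓ + 1) → U (ℓ + 1) = U (ℓ + 2)) :
    ∀ {m : ℕ}, U m ≠ U (m + 1) → finrank 𝕜 (U 0) + m ≤ finrank 𝕜 (U m)
  | 0, _ => le_rfl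
  | m + 1, h => by
    have hm : U m ≠ U (m + 1) := mt (hstab m) h
    have := finrank_lt_finrank_of_lt (lt_of_le_of_ne (hU (by omega)) hm)
    have := finrank_add_le_of_ne_succ hU hstab hm
    omega

end LinearAlgebra

section WordSpan

variable (𝕜 : Type*) [Field 𝕜] {Q A : Type*} (δ : Q → A → Q)

def pullback (u : List A) : (Q → 𝕜) →ₗ[𝕜] (Q → 𝕜) :=
  LinearMap.funLeft 𝕜 𝕜 fun q => run δ q u

lemma pullback_apply (u : List A) (f : Q → 𝕜) (q : Q) :
    pullback 𝕜 δ u f q = f (run δ q u) := rfl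

def wordSpan (S : Set (Q → 𝕜)) (ℓ : ℕ) : Submodule 𝕜 (Q → 𝕜) :=
  span 𝕜 {g | ∃ u : List A, u.length ≤ ℓ ∧ ∃ f ∈ S, pullback 𝕜 δ u f = g}

variable {𝕜 δ} {S : Set (Q → 𝕜)}

lemma pullback_mem_wordSpan {f : Q → 𝕜} (hf : f ∈ S) {u : List A} {ℓ : ℕ} (hu : u.length ≤ ℓ) :
    pullback 𝕜 δ u f ∈ wordSpan 𝕜 δ S ℓ :=
  subset_span ⟨u, hu, f, hf, rfl⟩

lemma mem_wordSpan_zero {f : Q → 𝕜} (hf : f ∈ S) : f ∈ wordSpan 𝕜 δ S 0 :=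
  pullback_mem_wordSpan (u := []) hf le_rfl

lemma wordSpan_mono : Monotone (wordSpan 𝕜 δ S) :=
  fun _ _ h => span_mono fun _ ⟨u, hu, f, hf, hg⟩ => ⟨u, hu.trans h, f, hf, hg⟩

lemma map_pullback_wordSpan_le (a : A) (ℓ : ℕ) :
    (wordSpan 𝕜 δ S ℓ).map (pullback 𝕜 δ [a]) ≤ wordSpan 𝕜 δ S (ℓ + 1) := by
  rw [wordSpan, map_span, span_le]
  rintro _ ⟨_, ⟨u, hu, f, hf, rfl⟩, rfl⟩
  exact pullback_mem_wordSpan (u := a :: u) hf (by simpa using hu)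

lemma wordSpan_succ_eq_succ_succ {ℓ : ℕ} (h : wordSpan 𝕜 δ S ℓ = wordSpan 𝕜 δ S (ℓ + 1)) :
    wordSpan 𝕜 δ S (ℓ + 1) = wordSpan 𝕜 δ S (ℓ + 2) := by
  refine (wordSpan_mono (by omega)).antisymm (span_le.2 ?_)
  rintro _ ⟨_ | ⟨a, u⟩, hu, f, hf, rfl⟩
  · exact pullback_mem_wordSpan hf (Nat.zero_le _)
  · have hmem : pullback 𝕜 δ u f ∈ wordSpan 𝕜 δ S ℓ :=
      h ▸ pullback_mem_wordSpan hf (by simpa using hu)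
    exact map_pullback_wordSpan_le a ℓ (mem_map_of_mem hmem)

lemma length_add_finrank_wordSpan_le [Fintype Q] (φ : (Q → 𝕜) →ₗ[𝕜] 𝕜) {f : Q → 𝕜} (hf : f ∈ S)
    {v : List A} (hv : φ (pullback 𝕜 δ v f) ≠ 0)
    (hshort : ∀ u : List A, u.length < v.length → ∀ g ∈ S, φ (pullback 𝕜 δ u g) = 0) :
    v.length + finrank 𝕜 (wordSpan 𝕜 δ S 0) ≤ Fintype.card Q := by
  rw [← finrank_fintype_fun_eq_card 𝕜]
  obtain hv0 | ⟨m, hm⟩ : v.length = 0 ∨ ∃ m, v.length = m + 1 :=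
    (Nat.eq_zero_or_eq_succ_pred _).imp_right fun h => ⟨_, h⟩
  · rw [hv0, zero_add]
    exact finrank_le _
  have hker : wordSpan 𝕜 δ S m ≤ LinearMap.ker φ := by
    refine span_le.2 ?_
    rintro _ ⟨u, hu, g, hg, rfl⟩
    exact hshort u (by omega) g hg
  have hne : wordSpan 𝕜 δ S m ≠ wordSpan 𝕜 δ S (m + 1) :=
    fun h => hv (hker (h ▸ pullback_mem_wordSpan hf hm.le))
  have htop : wordSpan 𝕜 δ S m ≠ ⊤ := fun h => hv (hker (h ▸ mem_top))
  have hgrow := finrank_add_le_of_ne_succ wordSpan_mono (fun _ => wordSpan_succ_eq_succ_succ) hne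
  have hlt := finrank_lt htop
  omega

end WordSpan

lemma max_div_le_of_le_mul {k c d : ℕ} (hc : 0 < c) (hck : c < k) (h₁ : k ≤ c * (d + 1))
    (h₂ : k ≤ (k - c) * (d + 1)) :
    max (((k : ℝ) - c) / c) (c / ((k : ℝ) - c)) ≤ d := by
  have hc' : (0 : ℝ) < c := by exact_mod_cast hc
  have hkc : (0 : ℝ) < k - c := by rw [sub_pos]; exact_mod_cast hck
  have h₁' : (k : ℝ) ≤ c * (d + 1) := by exact_mod_cast h₁
  have h₂' : (k : ℝ) ≤ (k - c) * (d + 1) := by rw [← Nat.cast_sub hck.le]; exact_mod_cast h₂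
  refine max_le ?_ ?_
  · rw [div_le_iff₀ hc']; linarith
  · rw [div_le_iff₀ hkc]; linarith

lemma max_div_le_of_lt {k c : ℕ} (hc : 0 < c) (hck : c < k) :
    max (((k : ℝ) - c) / c) (c / ((k : ℝ) - c)) ≤ k :=
  max_div_le_of_le_mul hc hck (k.le_succ.trans (Nat.le_mul_of_pos_left _ hc))
    (k.le_succ.trans (Nat.le_mul_of_pos_left _ (Nat.sub_pos_of_lt hck)))

section Automaton

variable {Q A : Type*} [DecidableEq Q] (δ : Q → A → Q)

/-- `Card (K u⁻¹ ∩ R)`. -/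
def preimageCard (R K : Finset Q) (u : List A) : ℕ :=
  #{q ∈ R | run δ q u ∈ K}

def preimageIndicator (K : Finset Q) (u : List A) : Q → ℝ :=
  fun q => if run δ q u ∈ K then 1 else 0

lemma pullback_preimageIndicator (K : Finset Q) (z u : List A) :
    pullback ℝ δ z (preimageIndicator δ K u) = preimageIndicator δ K (z ++ u) := by
  ext q
  simp [pullback_apply, preimageIndicator, run_append]

lemma sum_preimageIndicator (R K : Finset Q) (u : List A) :
    ∑ q ∈ R, preimageIndicator δ K u q = preimageCard δ R K u := by
  simp [preimageIndicator, preimageCard, sum_boole]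

lemma card_filter_preimageIndicator_ne_zero (R K : Finset Q) (u : List A) :
    #{q ∈ R | preimageIndicator δ K u q ≠ 0} = preimageCard δ R K u := by
  simp [preimageIndicator, preimageCard]

noncomputable def centeredIndicator {k : ℕ} (w : Fin k → List A) (K : Finset Q) (i : Fin k) :
    Q → ℝ :=
  preimageIndicator δ K (w i) - (#K / k : ℝ) • 1

variable {δ} {k : ℕ}

lemma preimageIndicator_mem_sup (w : Fin k → List A) (K : Finset Q) (i : Fin k) :
    preimageIndicator δ K (w i) ∈ wordSpan ℝ δ (Set.range (centeredIndicator δ w K)) 0 ⊔ ℝ ∙ 1 := by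
  have h : preimageIndicator δ K (w i) = centeredIndicator δ w K i + (#K / k : ℝ) • 1 := by
    simp [centeredIndicator]
  rw [h]
  exact add_mem (mem_sup_left (mem_wordSpan_zero (Set.mem_range_self i)))
    (mem_sup_right (smul_mem _ _ (mem_span_singleton_self 1)))

namespace IsIndependentFam

variable {w : Fin k → List A} {R : Finset Q}

lemma run_mem (hW : IsIndependentFam δ w R) (s : Q) (i : Fin k) : run δ s (w i) ∈ R :=
  hW.2.2 s ▸ mem_image_of_mem _ (mem_univ i)

lemma exists_run_eq (hW : IsIndependentFam δ w R) (s : Q) {t : Q} (ht : t ∈ R) :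
    ∃ i, run δ s (w i) = t := by
  simpa [← hW.2.2 s] using ht

lemma injective_run (hW : IsIndependentFam δ w R) (s : Q) :
    Function.Injective fun i => run δ s (w i) := by
  rw [← Set.injOn_univ, ← coe_univ, ← card_image_iff, hW.2.2 s, hW.2.1, card_univ,
    Fintype.card_fin]

lemma card_filter_run_mem_s5 (hW : IsIndependentFam δ w R) (s : Q) {T : Finset Q} (hT : T ⊆ R) :
    #{i | run δ s (w i) ∈ T} = #T := by
  rw [← card_image_of_injective _ (hW.injective_run s), ← filter_image (p := (· ∈ T)), hW.2.2 s,
    filter_mem_eq_inter, inter_eq_right.2 hT]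

lemma sum_preimageCard (hW : IsIndependentFam δ w R) {K : Finset Q} (hK : K ⊆ R) (z : List A) :
    ∑ i, preimageCard δ R K (z ++ w i) = k * #K := by
  calc ∑ i, preimageCard δ R K (z ++ w i) = ∑ q ∈ R, #{i | run δ (run δ q z) (w i) ∈ K} := by
        simp only [preimageCard, card_filter, run_append]
        exact sum_comm
    _ = k * #K := by simp [hW.card_filter_run_mem_s5 _ hK, hW.2.1]

lemma preimageCard_eq_of_forall_le (hW : IsIndependentFam δ w R) {K : Finset Q} (hK : K ⊆ R)
    {z : List A} (hle : ∀ i, preimageCard δ R K (z ++ w i) ≤ #K) (i : Fin k) :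
    preimageCard δ R K (z ++ w i) = #K :=
  (sum_eq_sum_iff_of_le fun j _ => hle j).1 (by simp [hW.sum_preimageCard hK]) i (mem_univ i)

lemma exists_card_le_preimageCard (hW : IsIndependentFam δ w R) {K₀ : Finset Q} (hK₀R : K₀ ⊆ R)
    (hK₀ : Reducible δ K₀) {K : Finset Q} (hKR : K ⊆ R) (hKne : K.Nonempty) :
    ∃ u i, #K₀ ≤ preimageCard δ R K (u ++ w i) := by
  obtain ⟨u, p, hup⟩ := hK₀
  obtain ⟨t, ht⟩ := hKne
  obtain ⟨i, hi⟩ := hW.exists_run_eq p (hKR ht)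
  refine ⟨u, i, card_le_card fun q hq => mem_filter.2 ⟨hK₀R hq, ?_⟩⟩
  have hq : run δ q u = p := mem_singleton.1 (hup ▸ mem_image_of_mem _ hq)
  rwa [run_append, hq, hi]

lemma sum_pullback_centeredIndicator (hW : IsIndependentFam δ w R) {K : Finset Q} (hK : K ⊆ R)
    (z : List A) (i : Fin k) :
    ∑ q ∈ R, pullback ℝ δ z (centeredIndicator δ w K i) q = preimageCard δ R K (z ++ w i) - #K := by
  have hk : (k : ℝ) * (#K / k) = #K := by
    rcases eq_or_ne k 0 with h | h
    · have : #K = 0 := by have := hW.2.1 ▸ card_le_card hK; omega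
      simp [h, this]
    · field_simp
  simp only [centeredIndicator, map_sub, map_smul, Pi.sub_apply, Pi.smul_apply,
    pullback_preimageIndicator, sum_sub_distrib, sum_preimageIndicator]
  simp [pullback_apply, hW.2.1, hk]

lemma length_add_finrank_le (hW : IsIndependentFam δ w R) {K : Finset Q} (hK : K ⊆ R)
    [Fintype Q] {v : List A} {i : Fin k} (hvi : #K < preimageCard δ R K (v ++ w i))
    (hbal : ∀ u : List A, u.length < v.length → ∀ j, preimageCard δ R K (u ++ w j) = #K) :
    v.length + finrank ℝ (wordSpan ℝ δ (Set.range (centeredIndicator δ w K)) 0) ≤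
      Fintype.card Q := by
  let φ : (Q → ℝ) →ₗ[ℝ] ℝ := ∑ q ∈ R, LinearMap.proj q
  have hφ (z : List A) (j : Fin k) :
      φ (pullback ℝ δ z (centeredIndicator δ w K j)) = preimageCard δ R K (z ++ w j) - #K := by
    simp [φ, hW.sum_pullback_centeredIndicator hK]
  refine length_add_finrank_wordSpan_le φ (Set.mem_range_self i) ?_ ?_
  · rw [hφ, sub_ne_zero]
    exact_mod_cast hvi.ne'
  · rintro u hu _ ⟨j, rfl⟩
    rw [hφ, hbal u hu j, sub_self]

lemma le_mul_finrank_span_preimageIndicator [Fintype Q] (hW : IsIndependentFam δ w R) {T : Finset Q}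
    (hT : T ⊆ R) (hTne : T.Nonempty) {t : ℕ} (ht : ∀ i, preimageCard δ R T (w i) ≤ t) :
    k ≤ t * finrank ℝ (span ℝ (Set.range fun i => preimageIndicator δ T (w i))) := by
  refine hW.2.1.ge.trans <| card_le_mul_finrank_span R _ t (fun q _ => ?_) ?_
  · obtain ⟨s, hs⟩ := hTne
    obtain ⟨i, hi⟩ := hW.exists_run_eq q (hT hs)
    exact ⟨_, Set.mem_range_self i, by simp [preimageIndicator, hi, hs]⟩
  · rintro _ ⟨i, rfl⟩
    rw [card_filter_preimageIndicator_ne_zero]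
    exact ht i

lemma preimageCard_sdiff (hW : IsIndependentFam δ w R) (K : Finset Q) (i : Fin k) :
    preimageCard δ R (R \ K) (w i) = k - preimageCard δ R K (w i) := by
  have hsplit := card_filter_add_card_filter_not (s := R) (fun q => run δ q (w i) ∈ K)
  have hsdiff : {q ∈ R | run δ q (w i) ∈ R \ K} = {q ∈ R | run δ q (w i) ∉ K} :=
    filter_congr fun q _ => by simp [hW.run_mem q i]
  rw [preimageCard, preimageCard, hsdiff, ← hW.2.1]
  omega

lemma preimageIndicator_sdiff_mem_sup (hW : IsIndependentFam δ w R) (K : Finset Q) (i : Fin k) :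
    preimageIndicator δ (R \ K) (w i) ∈
      wordSpan ℝ δ (Set.range (centeredIndicator δ w K)) 0 ⊔ ℝ ∙ 1 := by
  have h : preimageIndicator δ (R \ K) (w i) =
      (1 - #K / k : ℝ) • 1 - centeredIndicator δ w K i := by
    ext q
    by_cases hq : run δ q (w i) ∈ K <;>
      simp [centeredIndicator, preimageIndicator, hq, hW.run_mem q i]
  rw [h]
  exact sub_mem (mem_sup_right (smul_mem _ _ (mem_span_singleton_self 1)))
    (mem_sup_left (mem_wordSpan_zero (Set.mem_range_self i)))

lemma max_le_finrank_wordSpan [Fintype Q] (hW : IsIndependentFam δ w R) {K : Finset Q}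
    (hK : K ⊆ R) (hc : 0 < #K) (hck : #K < k) (hbal : ∀ i, preimageCard δ R K (w i) = #K) :
    max (((k : ℝ) - #K) / #K) (#K / ((k : ℝ) - #K)) ≤
      finrank ℝ (wordSpan ℝ δ (Set.range (centeredIndicator δ w K)) 0) := by
  set U := wordSpan ℝ δ (Set.range (centeredIndicator δ w K)) 0
  have hcardK : k ≤ #K * (finrank ℝ U + 1) :=
    (hW.le_mul_finrank_span_preimageIndicator hK (card_pos.1 hc) fun i => (hbal i).le).trans <|
      Nat.mul_le_mul_left _ <| finrank_le_finrank_add_one_of_le_sup_span_singleton <|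
        span_le.2 <| by rintro _ ⟨i, rfl⟩; exact preimageIndicator_mem_sup w K i
  have hcardRK : k ≤ (k - #K) * (finrank ℝ U + 1) := by
    have hne : (R \ K).Nonempty := by
      rw [← card_pos, card_sdiff_of_subset hK, hW.2.1]
      omega
    refine (hW.le_mul_finrank_span_preimageIndicator sdiff_subset hne
      fun i => (hW.preimageCard_sdiff K i).trans_le (by rw [hbal])).trans <|
      Nat.mul_le_mul_left _ <| finrank_le_finrank_add_one_of_le_sup_span_singleton <|
        span_le.2 <| by rintro _ ⟨i, rfl⟩; exact hW.preimageIndicator_sdiff_mem_sup K i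
  exact max_div_le_of_le_mul hc hck hcardK hcardRK

end IsIndependentFam

end Automaton

theorem stmt_5_general {Q A : Type*} [Fintype Q] [DecidableEq Q]
    (δ : Q → A → Q) {k : ℕ} (w : Fin k → List A) (R : Finset Q)
    (hW : IsIndependentFam δ w R) (M : ℕ)
    (hMub : ∀ K ⊆ R, Reducible δ K → K.card ≤ M)
    (hMmem : ∃ K ⊆ R, Reducible δ K ∧ K.card = M)
    (K : Finset Q) (hKR : K ⊆ R) (hKne : K.Nonempty) (hKred : Reducible δ K)
    (hKM : K.card ≠ M) :
    ∃ (v : List A) (i : Fin k),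
      K.card < (R.filter (fun q => run δ q (v ++ w i) ∈ K)).card ∧
      (v.length : ℝ) ≤ (Fintype.card Q : ℝ) -
        max (((k : ℝ) - (K.card : ℝ)) / (K.card : ℝ))
            ((K.card : ℝ) / ((k : ℝ) - (K.card : ℝ))) := by
  obtain ⟨K₀, hK₀R, hK₀, rfl⟩ := hMmem
  have hc : 0 < #K := card_pos.2 hKne
  have hcK₀ : #K < #K₀ := lt_of_le_of_ne (hMub K hKR hKred) hKM
  have hck : #K < k := hW.2.1 ▸ hcK₀.trans_le (card_le_card hK₀R)
  obtain ⟨u, j, hu⟩ := hW.exists_card_le_preimageCard hK₀R hK₀ hKR hKne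
  obtain ⟨v, ⟨i, hvi⟩, hmin⟩ := (measure List.length).wf.has_min
    {v | ∃ i, #K < preimageCard δ R K (v ++ w i)} ⟨u, j, hcK₀.trans_le hu⟩
  refine ⟨v, i, hvi, ?_⟩
  have hbal (u : List A) (hu : u.length < v.length) (j : Fin k) :
      preimageCard δ R K (u ++ w j) = #K :=
    hW.preimageCard_eq_of_forall_le hKR (fun j => not_lt.1 fun h => hmin u ⟨j, h⟩ hu) j
  have hlen : (v.length : ℝ) +
      finrank ℝ (wordSpan ℝ δ (Set.range (centeredIndicator δ w K)) 0) ≤ Fintype.card Q := by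
    exact_mod_cast hW.length_add_finrank_le hKR hvi hbal
  have hkQ : (k : ℝ) ≤ Fintype.card Q := by exact_mod_cast hW.2.1 ▸ card_le_univ R
  obtain hv | hv := Nat.eq_zero_or_pos v.length
  · have := max_div_le_of_lt hc hck
    rw [hv]
    push_cast
    linarith
  · have := hW.max_le_finrank_wordSpan hKR hc hck fun j => by simpa using hbal [] hv j
    linarith

/-- If `K` is a non-empty reducible subset of `R` of non-maximal cardinality, then
there are a word `v` and an index `i` with
`Card(K (v w_i)^{-1} ∩ R) > Card K` and
`|v| ≤ n − max{(k − Card K)/Card K, Card K/(k − Card K)}`. -/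
theorem stmt_5 {Q A : Type*} [Fintype Q] [DecidableEq Q] [Fintype A]
    (δ : Q → A → Q) {k : ℕ} (w : Fin k → List A) (R : Finset Q)
    (hW : IsIndependentFam δ w R) (M : ℕ)
    (hMub : ∀ K ⊆ R, Reducible δ K → K.card ≤ M)
    (hMmem : ∃ K ⊆ R, Reducible δ K ∧ K.card = M)
    (K : Finset Q) (hKR : K ⊆ R) (hKne : K.Nonempty) (hKred : Reducible δ K)
    (hKM : K.card ≠ M) :
    ∃ (v : List A) (i : Fin k),
      K.card < (R.filter (fun q => run δ q (v ++ w i) ∈ K)).card ∧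
      (v.length : ℝ) ≤ (Fintype.card Q : ℝ) -
        max (((k : ℝ) - (K.card : ℝ)) / (K.card : ℝ))
            ((K.card : ℝ) / ((k : ℝ) - (K.card : ℝ))) :=
  stmt_5_general δ w R hW M hMub hMmem K hKR hKne hKred hKM
end

section
/- For all integers n and k with 1 ≤ k ≤ n − 1, one has 2(n − 1)·ln(n) − 2k·ln(k + 1) ≤ (2n − 1 + 2·ln 2)·(n − k − 1). -/
/-!
Split the left side as `2(n - 1)(ln n - ln(k + 1)) + 2(n - k - 1) ln(k + 1)` and apply
`ln x ≤ x - 1` twice: at `x = n / (k + 1)` it gives `ln n - ln(k + 1) ≤ (n - k - 1) / 2`,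
and at `x = (k + 1) / 2` it gives `ln(k + 1) ≤ (k - 1) / 2 + ln 2`.
-/

open Real

lemma Real.log_sub_log_le_div {x y : ℝ} (hx : 0 < x) (hy : 0 < y) :
    log y - log x ≤ (y - x) / x := by
  have h := log_le_sub_one_of_pos (div_pos hy hx)
  rwa [log_div hy.ne' hx.ne', div_sub_one hx.ne'] at h

lemma Real.log_le_half_sub_one_add_log_two {x : ℝ} (hx : 0 < x) :
    log x ≤ x / 2 - 1 + log 2 := by
  have h := log_le_sub_one_of_pos (half_pos hx)
  rw [log_div hx.ne' two_ne_zero] at h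
  linarith

lemma Real.two_mul_sub_one_mul_log_sub_le (a N : ℝ) (ha : 1 ≤ a) (haN : a + 1 ≤ N) :
    2 * (N - 1) * log N - 2 * a * log (a + 1) ≤ (2 * N - 1 + 2 * log 2) * (N - a - 1) := by
  have hd : 0 ≤ N - a - 1 := by linarith
  have hratio : log N - log (a + 1) ≤ (N - a - 1) / 2 := by
    calc log N - log (a + 1) ≤ (N - (a + 1)) / (a + 1) :=
          log_sub_log_le_div (by linarith) (by linarith)
      _ ≤ (N - a - 1) / 2 := by
        rw [sub_add_eq_sub_sub]
        exact div_le_div_of_nonneg_left hd two_pos (by linarith)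
  have hlog : log (a + 1) ≤ (a - 1) / 2 + log 2 := by
    linarith [log_le_half_sub_one_add_log_two (by linarith : (0 : ℝ) < a + 1)]
  calc 2 * (N - 1) * log N - 2 * a * log (a + 1)
        = 2 * (N - 1) * (log N - log (a + 1)) + 2 * (N - a - 1) * log (a + 1) := by ring
    _ ≤ 2 * (N - 1) * ((N - a - 1) / 2) + 2 * (N - a - 1) * ((a - 1) / 2 + log 2) := by
        gcongr; linarith
    _ ≤ (2 * N - 1 + 2 * log 2) * (N - a - 1) := by
        nlinarith [mul_nonneg hd (by linarith : 0 ≤ N - a + 1)]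

/-- For all integers `n, k` with `1 ≤ k ≤ n − 1`,
`2(n − 1)·ln n − 2k·ln(k + 1) ≤ (2n − 1 + 2·ln 2)·(n − k − 1)`. -/
theorem stmt_12 (n k : ℕ) (hk : 1 ≤ k) (hkn : k < n) :
    2 * ((n : ℝ) - 1) * Real.log (n : ℝ) - 2 * (k : ℝ) * Real.log ((k : ℝ) + 1) ≤
      (2 * (n : ℝ) - 1 + 2 * Real.log 2) * ((n : ℝ) - (k : ℝ) - 1) :=
  two_mul_sub_one_mul_log_sub_le k n (by exact_mod_cast hk) (by exact_mod_cast hkn)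
end
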